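/- Let 1 ≤ p < +∞ and let f : ℝ^{m×n} → ℝ be continuous and positively p-homogeneous, i.e., f(tA) = t^p f(A) for all t ≥ 0 and A ∈ ℝ^{m×n}. Let u : ℝⁿ → ℝ^m be Lipschitz with support contained in the closed unit ball B(0,1), let ρ ∈ ℝⁿ be a unit vector, and set D_ρ := {x ∈ ℝⁿ : x·ρ < 0}. Let Ω ⊂ ℝⁿ be a bounded open set with 0 ∈ ∂Ω such that the blow-ups of Ω at 0 converge to the half-space D_ρ in measure: |((jΩ) Δ D_ρ) ∩ B(0,1)| → 0 as j → ∞, where jΩ = {jx : x ∈ Ω} and Δ denotes symmetric difference. Define u_j(x) := j^{(n−p)/p} u(jx). Then lim_{j→∞} ∫_Ω f(∇u_j(x)) dx = ∫_{D_ρ ∩ B(0,1)} f(∇u(y)) dy. -/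

import Mathlib

open MeasureTheory Filter Topology Metric Bornology
open scoped ENNReal NNReal RealInnerProductSpace

noncomputable section

/-- The (a.e.-defined) gradient of a map `u : ℝⁿ → ℝᵐ`, identified with an `m × n` matrix. -/
def grad {n m : ℕ} (u : EuclideanSpace ℝ (Fin n) → EuclideanSpace ℝ (Fin m))
    (x : EuclideanSpace ℝ (Fin n)) : Matrix (Fin m) (Fin n) ℝ :=
  Matrix.of fun i j => fderiv ℝ u x (EuclideanSpace.single j 1) i

/-!
By the chain rule `∇u_j(x) = j^{n/p} ∇u(jx)`, so `p`-homogeneity of `f` and the change of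
variables `y = jx` turn `∫_Ω f(∇u_j)` into `∫_{jΩ} f(∇u)`, which only sees `jΩ ∩ B(0,1)`
because `∇u` vanishes off the closed ball and the unit sphere is null. As `∇u` takes values in a
compact set of matrices, `f(∇u)` is bounded by some `C`, and the two integrals over `jΩ ∩ B(0,1)`
and `D_ρ ∩ B(0,1)` differ by at most `C |(jΩ Δ D_ρ) ∩ B(0,1)| → 0`.
-/

open scoped symmDiff Pointwise

section SetIntegral

variable {α E : Type*} [MeasurableSpace α] {μ : Measure α} [NormedAddCommGroup E]
  [NormedSpace ℝ E]

theorem norm_setIntegral_sub_setIntegral_le {f : α → E} {s t : Set α} {C : ℝ}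
    (hs : MeasurableSet s) (ht : MeasurableSet t) (hfs : IntegrableOn f s μ)
    (hft : IntegrableOn f t μ) (hst : μ (s ∆ t) ≠ ∞) (hC : ∀ x ∈ s ∆ t, ‖f x‖ ≤ C) :
    ‖∫ x in s, f x ∂μ - ∫ x in t, f x ∂μ‖ ≤ C * μ.real (s ∆ t) := by
  have hs_t : μ (s \ t) ≠ ∞ := ne_top_of_le_ne_top hst (measure_mono Set.subset_union_left)
  have ht_s : μ (t \ s) ≠ ∞ := ne_top_of_le_ne_top hst (measure_mono Set.subset_union_right)
  calc ‖∫ x in s, f x ∂μ - ∫ x in t, f x ∂μ‖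
      = ‖∫ x in s \ t, f x ∂μ - ∫ x in t \ s, f x ∂μ‖ := by
        rw [← integral_inter_add_sdiff ht hfs, ← integral_inter_add_sdiff hs hft,
          Set.inter_comm]
        abel_nf
    _ ≤ ‖∫ x in s \ t, f x ∂μ‖ + ‖∫ x in t \ s, f x ∂μ‖ := norm_sub_le _ _
    _ ≤ C * μ.real (s \ t) + C * μ.real (t \ s) := by
        gcongr
        · exact norm_setIntegral_le_of_norm_le_const hs_t.lt_top fun x hx => hC x (Or.inl hx)
        · exact norm_setIntegral_le_of_norm_le_const ht_s.lt_top fun x hx => hC x (Or.inr hx)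
    _ = C * μ.real (s ∆ t) := by
        rw [Set.symmDiff_def,
          measureReal_union disjoint_sdiff_sdiff (ht.diff hs) hs_t ht_s, mul_add]

end SetIntegral

section Gradient

variable {n m : ℕ}

def clmToMatrix :
    (EuclideanSpace ℝ (Fin n) →L[ℝ] EuclideanSpace ℝ (Fin m)) →ₗ[ℝ] Matrix (Fin m) (Fin n) ℝ where
  toFun L := Matrix.of fun i j => L (EuclideanSpace.single j 1) i
  map_add' _ _ := rfl
  map_smul' _ _ := rfl

theorem grad_eq_clmToMatrix (u : EuclideanSpace ℝ (Fin n) → EuclideanSpace ℝ (Fin m))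
    (x : EuclideanSpace ℝ (Fin n)) : grad u x = clmToMatrix (fderiv ℝ u x) :=
  rfl

theorem continuous_clmToMatrix : Continuous (clmToMatrix (n := n) (m := m)) :=
  LinearMap.continuous_of_finiteDimensional _

theorem grad_const_smul_comp_smul (u : EuclideanSpace ℝ (Fin n) → EuclideanSpace ℝ (Fin m))
    (c r : ℝ) (x : EuclideanSpace ℝ (Fin n)) :
    grad (fun y => c • u (r • y)) x = (c * r) • grad u (r • x) := by
  have : fderiv ℝ (c • (u <| r • ·)) x = (c * r) • fderiv ℝ u (r • x) := by
    rw [fderiv_const_smul_field, Pi.smul_apply, fderiv_comp_smul, smul_smul]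
  rw [grad_eq_clmToMatrix, grad_eq_clmToMatrix, ← map_smul, ← this]
  rfl

theorem grad_eq_zero_of_notMem_tsupport {u : EuclideanSpace ℝ (Fin n) → EuclideanSpace ℝ (Fin m)}
    {x : EuclideanSpace ℝ (Fin n)} (hx : x ∉ tsupport u) : grad u x = 0 := by
  rw [grad_eq_clmToMatrix, fderiv_of_notMem_tsupport ℝ hx, map_zero]

variable {f : Matrix (Fin m) (Fin n) ℝ → ℝ}

theorem Continuous.measurable_comp_grad (hf : Continuous f)
    (u : EuclideanSpace ℝ (Fin n) → EuclideanSpace ℝ (Fin m)) :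
    Measurable fun x => f (grad u x) :=
  (hf.comp continuous_clmToMatrix).measurable.comp (measurable_fderiv ℝ u)

theorem LipschitzWith.exists_bound_comp_grad (hf : Continuous f)
    {u : EuclideanSpace ℝ (Fin n) → EuclideanSpace ℝ (Fin m)} {K : ℝ≥0} (hu : LipschitzWith K u) :
    ∃ C, ∀ x, ‖f (grad u x)‖ ≤ C := by
  obtain ⟨C, hC⟩ := ((isCompact_closedBall _ (K : ℝ)).image
    (hf.comp continuous_clmToMatrix)).isBounded.exists_norm_le
  exact ⟨C, fun x => hC _ ⟨fderiv ℝ u x,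
    mem_closedBall_zero_iff.2 (norm_fderiv_le_of_lipschitz ℝ hu), rfl⟩⟩

end Gradient

section Scaling

variable {n m : ℕ} {f : Matrix (Fin m) (Fin n) ℝ → ℝ}

theorem setIntegral_comp_grad_rescale {p : ℝ} (hp : 0 < p)
    (hhom : ∀ t : ℝ, 0 ≤ t → ∀ A, f (t • A) = t ^ p * f A)
    (u : EuclideanSpace ℝ (Fin n) → EuclideanSpace ℝ (Fin m)) (s : Set (EuclideanSpace ℝ (Fin n)))
    {r : ℝ} (hr : 0 < r) :
    ∫ x in s, f (grad (fun y => r ^ (((n : ℝ) - p) / p) • u (r • y)) x)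
      = ∫ y in r • s, f (grad u y) := by
  have hrn : r ^ (((n : ℝ) - p) / p) * r = r ^ ((n : ℝ) / p) := by
    rw [← Real.rpow_add_one hr.ne']
    congr 1
    field_simp
    ring
  have hpoint : ∀ x, f (grad (fun y => r ^ (((n : ℝ) - p) / p) • u (r • y)) x)
      = r ^ n * f (grad u (r • x)) := fun x => by
    rw [grad_const_smul_comp_smul, hrn, hhom _ (by positivity), ← Real.rpow_mul hr.le,
      div_mul_cancel₀ _ hp.ne', Real.rpow_natCast]
  simp_rw [hpoint]
  rw [integral_const_mul,
    Measure.setIntegral_comp_smul_of_pos volume (fun y => f (grad u y)) s hr,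
    finrank_euclideanSpace_fin, smul_eq_mul, mul_inv_cancel_left₀ (by positivity)]

theorem setIntegral_comp_grad_inter_ball (hf0 : f 0 = 0)
    {u : EuclideanSpace ℝ (Fin n) → EuclideanSpace ℝ (Fin m)} {c : EuclideanSpace ℝ (Fin n)}
    {r : ℝ} (hr : r ≠ 0) (hsupp : Function.support u ⊆ closedBall c r)
    {s : Set (EuclideanSpace ℝ (Fin n))} (hs : NullMeasurableSet s) :
    ∫ y in s, f (grad u y) = ∫ y in s ∩ ball c r, f (grad u y) := by
  have htsupp : tsupport u ⊆ closedBall c r := closure_minimal hsupp isClosed_closedBall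
  refine setIntegral_eq_of_subset_of_ae_sdiff_eq_zero hs Set.inter_subset_left ?_
  filter_upwards [measure_eq_zero_iff_ae_notMem.1 (Measure.addHaar_sphere_of_ne_zero volume c hr)]
    with y hy hys
  have hy_ball : y ∉ closedBall c r := by
    rw [← ball_union_sphere]
    exact fun h => h.elim (fun hb => hys.2 ⟨hys.1, hb⟩) hy
  rw [grad_eq_zero_of_notMem_tsupport fun h => hy_ball (htsupp h), hf0]

end Scaling

theorem stmt15_general {m n : ℕ} (p : ℝ) (hp : 1 ≤ p)
    (f : Matrix (Fin m) (Fin n) ℝ → ℝ) (hfc : Continuous f)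
    (hhom : ∀ t : ℝ, 0 ≤ t → ∀ A, f (t • A) = t ^ p * f A)
    (u : EuclideanSpace ℝ (Fin n) → EuclideanSpace ℝ (Fin m))
    (K : ℝ≥0) (hu : LipschitzWith K u)
    (hsupp : Function.support u ⊆ Metric.closedBall 0 1)
    (ρ : EuclideanSpace ℝ (Fin n))
    (Ω : Set (EuclideanSpace ℝ (Fin n))) (hΩo : IsOpen Ω)
    (hblow : Tendsto (fun j : ℕ =>
        volume (symmDiff ((fun x => (j : ℝ) • x) '' Ω) {x | ⟪x, ρ⟫ < 0} ∩ Metric.ball 0 1))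
      atTop (nhds 0)) :
    Tendsto
      (fun j : ℕ => ∫ x in Ω,
        f (grad (fun y => ((j : ℝ) ^ (((n : ℝ) - p) / p)) • u ((j : ℝ) • y)) x))
      atTop
      (nhds (∫ y in {x | ⟪x, ρ⟫ < 0} ∩ Metric.ball 0 1, f (grad u y))) := by
  have hp0 : 0 < p := zero_lt_one.trans_le hp
  have hf0 : f 0 = 0 := by simpa [Real.zero_rpow hp0.ne'] using hhom 0 le_rfl 0
  obtain ⟨C, hC⟩ := hu.exists_bound_comp_grad hfc
  have hintegrable : ∀ s, IntegrableOn (fun y => f (grad u y)) (s ∩ ball 0 1) :=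
    fun s => Measure.integrableOn_of_bounded
      ((measure_mono Set.inter_subset_right).trans_lt measure_ball_lt_top).ne
      (hfc.measurable_comp_grad u).aestronglyMeasurable (ae_of_all _ hC)
  have hD : MeasurableSet {x : EuclideanSpace ℝ (Fin n) | ⟪x, ρ⟫ < 0} :=
    measurableSet_lt (measurable_id.inner measurable_const) measurable_const
  have hvol := (ENNReal.tendsto_toReal ENNReal.zero_ne_top).comp hblow
  rw [ENNReal.toReal_zero] at hvol
  refine tendsto_iff_norm_sub_tendsto_zero.2 (squeeze_zero' (Eventually.of_forall fun _ =>
    norm_nonneg _) ?_ (by simpa using hvol.const_mul C))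
  filter_upwards [eventually_gt_atTop 0] with j hj0
  have hj : (0 : ℝ) < j := Nat.cast_pos.2 hj0
  have hjΩ : MeasurableSet ((j : ℝ) • Ω) := (hΩo.smul₀ hj.ne').measurableSet
  rw [setIntegral_comp_grad_rescale hp0 hhom u Ω hj,
    setIntegral_comp_grad_inter_ball hf0 one_ne_zero hsupp hjΩ.nullMeasurableSet,
    Set.inter_symmDiff_distrib_right]
  exact norm_setIntegral_sub_setIntegral_le (hjΩ.inter measurableSet_ball)
    (hD.inter measurableSet_ball) (hintegrable _) (hintegrable _)
    ((measure_mono (Set.symmDiff_subset_union.trans (Set.union_subset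
      Set.inter_subset_right Set.inter_subset_right))).trans_lt measure_ball_lt_top).ne
    fun x _ => hC x

/-- Scaling (blow-up) identity for positively `p`-homogeneous integrands: if `f` is
continuous with `f(tA) = t^p f(A)` for `t ≥ 0`, `u` is Lipschitz with support in the closed
unit ball, `ρ` is a unit vector, `Ω` is a bounded open set with `0 ∈ ∂Ω` whose blow-ups at
`0` converge in measure to the half-space `D_ρ = {x·ρ < 0}`, and
`u_j(x) = j^{(n−p)/p} u(jx)`, then `∫_Ω f(∇u_j) → ∫_{D_ρ ∩ B(0,1)} f(∇u)`. -/
theorem stmt15 {m n : ℕ} (p : ℝ) (hp : 1 ≤ p)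
    (f : Matrix (Fin m) (Fin n) ℝ → ℝ) (hfc : Continuous f)
    (hhom : ∀ t : ℝ, 0 ≤ t → ∀ A, f (t • A) = t ^ p * f A)
    (u : EuclideanSpace ℝ (Fin n) → EuclideanSpace ℝ (Fin m))
    (K : ℝ≥0) (hu : LipschitzWith K u)
    (hsupp : Function.support u ⊆ Metric.closedBall 0 1)
    (ρ : EuclideanSpace ℝ (Fin n)) (hρ : ‖ρ‖ = 1)
    (Ω : Set (EuclideanSpace ℝ (Fin n))) (hΩo : IsOpen Ω) (hΩb : Bornology.IsBounded Ω)
    (h0 : (0 : EuclideanSpace ℝ (Fin n)) ∈ frontier Ω)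
    (hblow : Tendsto (fun j : ℕ =>
        volume (symmDiff ((fun x => (j : ℝ) • x) '' Ω) {x | ⟪x, ρ⟫ < 0} ∩ Metric.ball 0 1))
      atTop (nhds 0)) :
    Tendsto
      (fun j : ℕ => ∫ x in Ω,
        f (grad (fun y => ((j : ℝ) ^ (((n : ℝ) - p) / p)) • u ((j : ℝ) • y)) x))
      atTop
      (nhds (∫ y in {x | ⟪x, ρ⟫ < 0} ∩ Metric.ball 0 1, f (grad u y))) :=
  stmt15_general p hp f hfc hhom u K hu hsupp ρ Ω hΩo hblow
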